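/- Let W ⊆ ℝ^d be open, let Z ⊆ W be nonempty and relatively closed in W, and let H : W → ℝ^r be continuously differentiable with H vanishing on Z. Then for every compact K ⊆ W there exists a constant L > 0 such that |H(w)| ≤ L · dist(w, Z) for all w ∈ K. -/

import Mathlib

open Metric Set Filter Topology

/-!
On a compact `cthickening ε K ⊆ W` the derivative of `H` is bounded by some `M`, so by the mean
value inequality `‖H w‖ ≤ M * dist w z` whenever `z ∈ Z` is `ε`-close to `w ∈ K`; letting `z`
approach the infimum gives `‖H w‖ ≤ M * infDist w Z` as soon as `infDist w Z < ε`. Away from `Z`,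
i.e. when `infDist w Z ≥ ε`, the bound `‖H w‖ ≤ B ≤ (B / ε) * infDist w Z` with `B = sup_K ‖H‖`
suffices.
-/

theorem Metric.le_mul_infDist_of_forall_dist_lt {X : Type*} [PseudoMetricSpace X] {Z : Set X}
    {w : X} {a M ε : ℝ} (hZ : Z.Nonempty) (hM : 0 ≤ M)
    (h : ∀ z ∈ Z, dist w z < ε → a ≤ M * dist w z) (hw : infDist w Z < ε) :
    a ≤ M * infDist w Z := by
  have hlim : Tendsto (fun t => M * t) (𝓝[>] infDist w Z) (𝓝 (M * infDist w Z)) :=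
    ((continuous_const_mul M).tendsto _).mono_left nhdsWithin_le_nhds
  refine ge_of_tendsto hlim ?_
  filter_upwards [Ioo_mem_nhdsGT hw] with t ⟨ht_gt, ht_lt⟩
  obtain ⟨z, hz, hzt⟩ := (infDist_lt_iff hZ).1 ht_gt
  exact (h z hz (hzt.trans ht_lt)).trans (by gcongr)

section

variable {E F : Type*} [NormedAddCommGroup E] [NormedSpace ℝ E]
  [NormedAddCommGroup F] [NormedSpace ℝ F]

theorem norm_le_mul_dist_of_fderiv_le {H : E → F} {w z : E} {ε M : ℝ}
    (hH : ∀ x ∈ closedBall w ε, DifferentiableAt ℝ H x ∧ ‖fderiv ℝ H x‖ ≤ M)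
    (hzw : dist w z ≤ ε) (hHz : H z = 0) : ‖H w‖ ≤ M * dist w z := by
  have hz : z ∈ closedBall w ε := mem_closedBall'.2 hzw
  have hw : w ∈ closedBall w ε := mem_closedBall_self (dist_nonneg.trans hzw)
  simpa [hHz, dist_eq_norm] using (convex_closedBall w ε).norm_image_sub_le_of_norm_fderiv_le
    (fun x hx => (hH x hx).1) (fun x hx => (hH x hx).2) hz hw

theorem norm_le_mul_infDist_of_fderiv_le {H : E → F} {Z : Set E} {w : E} {ε M : ℝ}
    (hZ : Z.Nonempty) (hHZ : ∀ z ∈ Z, H z = 0) (hM : 0 ≤ M)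
    (hH : ∀ x ∈ closedBall w ε, DifferentiableAt ℝ H x ∧ ‖fderiv ℝ H x‖ ≤ M)
    (hw : infDist w Z < ε) : ‖H w‖ ≤ M * infDist w Z :=
  le_mul_infDist_of_forall_dist_lt hZ hM
    (fun z hz hwz => norm_le_mul_dist_of_fderiv_le hH hwz.le (hHZ z hz)) hw

theorem IsCompact.exists_cthickening_fderiv_bound [ProperSpace E] {H : E → F} {W K : Set E}
    (hW : IsOpen W) (hH : ContDiffOn ℝ 1 H W) (hK : IsCompact K) (hKW : K ⊆ W) :
    ∃ ε > 0, ∃ M ≥ 0, ∀ x ∈ cthickening ε K, DifferentiableAt ℝ H x ∧ ‖fderiv ℝ H x‖ ≤ M := by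
  obtain ⟨ε, hε, hKεW⟩ := hK.exists_cthickening_subset_open hW hKW
  obtain ⟨M, hM⟩ := hK.cthickening.exists_bound_of_continuousOn
    ((hH.continuousOn_fderiv_of_isOpen hW le_rfl).mono hKεW)
  refine ⟨ε, hε, max M 0, le_max_right _ _, fun x hx => ⟨?_, (hM x hx).trans (le_max_left _ _)⟩⟩
  exact (hH.differentiableOn one_ne_zero x (hKεW hx)).differentiableAt
    (hW.mem_nhds (hKεW hx))

end

theorem vanishing_on_closed_set_dist_bound_general {d r : ℕ}
    (W Z K : Set (EuclideanSpace ℝ (Fin d)))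
    (hW : IsOpen W) (hZne : Z.Nonempty)
    (H : EuclideanSpace ℝ (Fin d) → EuclideanSpace ℝ (Fin r))
    (hH : ContDiffOn ℝ 1 H W)
    (hHZ : ∀ z ∈ Z, H z = 0)
    (hK : IsCompact K) (hKW : K ⊆ W) :
    ∃ L > 0, ∀ w ∈ K, ‖H w‖ ≤ L * infDist w Z := by
  obtain ⟨ε, hε, M, hM0, hM⟩ := hK.exists_cthickening_fderiv_bound hW hH hKW
  obtain ⟨B, hB⟩ := hK.exists_bound_of_continuousOn (hH.continuousOn.mono hKW)
  refine ⟨M + |B| / ε + 1, by positivity, fun w hw => ?_⟩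
  have hdist : 0 ≤ infDist w Z := infDist_nonneg
  rcases lt_or_ge (infDist w Z) ε with hnear | hfar
  · calc ‖H w‖ ≤ M * infDist w Z := norm_le_mul_infDist_of_fderiv_le hZne hHZ hM0
          (fun x hx => hM x (closedBall_subset_cthickening hw ε hx)) hnear
      _ ≤ (M + |B| / ε + 1) * infDist w Z := by gcongr; linarith [div_nonneg (abs_nonneg B) hε.le]
  · calc ‖H w‖ ≤ |B| := (hB w hw).trans (le_abs_self B)
      _ ≤ |B| / ε * infDist w Z := by
          rw [div_mul_eq_mul_div, le_div_iff₀ hε]; gcongr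
      _ ≤ (M + |B| / ε + 1) * infDist w Z := by gcongr; linarith

/-- Let `W ⊆ ℝ^d` be open, `Z ⊆ W` nonempty and relatively closed in `W`, and
`H : W → ℝ^r` be `C¹` with `H = 0` on `Z`.  Then for every compact `K ⊆ W` there is
`L > 0` with `|H(w)| ≤ L · dist(w, Z)` for all `w ∈ K`. -/
theorem vanishing_on_closed_set_dist_bound {d r : ℕ}
    (W Z K : Set (EuclideanSpace ℝ (Fin d)))
    (hW : IsOpen W) (hZW : Z ⊆ W) (hZne : Z.Nonempty)
    (hZclosed : closure Z ∩ W ⊆ Z)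
    (H : EuclideanSpace ℝ (Fin d) → EuclideanSpace ℝ (Fin r))
    (hH : ContDiffOn ℝ 1 H W)
    (hHZ : ∀ z ∈ Z, H z = 0)
    (hK : IsCompact K) (hKW : K ⊆ W) :
    ∃ L > 0, ∀ w ∈ K, ‖H w‖ ≤ L * infDist w Z :=
  vanishing_on_closed_set_dist_bound_general W Z K hW hZne H hH hHZ hK hKW
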